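/- arXiv:2503.04651 — 2 statements merged into one kernel-verified Lean document; each statement's English description precedes it below -/
import Mathlib

section
/- For every real number p, the function t ↦ e^{itp}/(e^{πt} + e^{-πt}) is (Bochner/Lebesgue) integrable on ℝ, and ∫_ℝ e^{itp}/(e^{πt} + e^{-πt}) dt = 1/(e^{p/2} + e^{-p/2}). -/
/-!
The logistic substitution `x = sigmoid s = 1 / (1 + e^{-s})` turns Euler's Beta integral
`B(u, v)` into `∫ e^{us} / (1 + e^s)^{u+v} ds`. For `v = 1 - u` the reflection formula
`Γ(u) Γ(1 - u) = π / sin (π u)` evaluates it, and the integrand of the theorem is the case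
`s = 2πt`, `u = 1/2 + ip/(2π)`, for which `sin (π u) = cosh (p/2)`.
-/

open MeasureTheory Real Set

lemma Complex.ofReal_cpow_eq_exp {x : ℝ} (hx : 0 < x) (w : ℂ) :
    (x : ℂ) ^ w = Complex.exp (Real.log x * w) := by
  rw [Complex.cpow_def_of_ne_zero (by exact_mod_cast hx.ne'), Complex.ofReal_log hx.le]

lemma Real.log_one_sub_sigmoid (s : ℝ) : log (1 - sigmoid s) = -log (1 + exp s) := by
  rw [← sigmoid_neg, sigmoid_def, neg_neg, log_inv]

lemma Real.log_sigmoid (s : ℝ) : log (sigmoid s) = s - log (1 + exp s) := by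
  have h := congrArg log (sigmoid_mul_rexp_neg s)
  rw [log_mul (sigmoid_pos s).ne' (exp_pos _).ne', log_exp, sigmoid_neg,
    log_one_sub_sigmoid] at h
  linarith

lemma abs_deriv_sigmoid_smul_betaIntegrand (u v : ℂ) (s : ℝ) :
    |sigmoid s * (1 - sigmoid s)| •
        ((sigmoid s : ℂ) ^ (u - 1) * (1 - (sigmoid s : ℂ)) ^ (v - 1)) =
      Complex.exp (u * s) / ((1 + exp s : ℝ) : ℂ) ^ (u + v) := by
  have h0 := sigmoid_pos s
  have h1 : 0 < 1 - sigmoid s := sub_pos.2 (sigmoid_lt_one s)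
  have hσ : ((sigmoid s * (1 - sigmoid s) : ℝ) : ℂ) =
      Complex.exp ((log (sigmoid s) + log (1 - sigmoid s) : ℝ)) := by
    rw [← log_mul h0.ne' h1.ne', ← Complex.ofReal_exp, exp_log (mul_pos h0 h1)]
  rw [abs_of_pos (mul_pos h0 h1), Complex.real_smul, hσ, ← Complex.ofReal_one,
    ← Complex.ofReal_sub, Complex.ofReal_cpow_eq_exp h0, Complex.ofReal_cpow_eq_exp h1,
    Complex.ofReal_cpow_eq_exp (by positivity), log_sigmoid, log_one_sub_sigmoid,
    ← Complex.exp_add, ← Complex.exp_add, ← Complex.exp_sub]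
  congr 1
  push_cast
  ring

theorem Complex.integrable_and_integral_cexp_mul_div_cpow_eq_betaIntegral {u v : ℂ}
    (hu : 0 < u.re) (hv : 0 < v.re) :
    Integrable (fun s : ℝ => Complex.exp (u * s) / ((1 + Real.exp s : ℝ) : ℂ) ^ (u + v)) ∧
      ∫ s : ℝ, Complex.exp (u * s) / ((1 + Real.exp s : ℝ) : ℂ) ^ (u + v) =
        betaIntegral u v := by
  have hσ : ∀ s ∈ univ, HasDerivWithinAt sigmoid (sigmoid s * (1 - sigmoid s)) univ s :=
    fun s _ => (hasDerivAt_sigmoid s).hasDerivWithinAt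
  have hinj : InjOn sigmoid univ := sigmoid_injective.injOn
  have himage : sigmoid '' univ = Ioo 0 1 := by rw [image_univ, range_sigmoid]
  set g : ℝ → ℂ := fun x => (x : ℂ) ^ (u - 1) * (1 - (x : ℂ)) ^ (v - 1)
  have hg : IntegrableOn g (Ioo 0 1) :=
    ((intervalIntegrable_iff_integrableOn_Ioc_of_le zero_le_one).1
      (betaIntegral_convergent hu hv)).mono_set Ioo_subset_Ioc_self
  constructor
  · have := (integrableOn_image_iff_integrableOn_abs_deriv_smul .univ hσ hinj g).1
      (himage ▸ hg)
    simpa only [integrableOn_univ, g, abs_deriv_sigmoid_smul_betaIntegrand] using this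
  · have := integral_image_eq_integral_abs_deriv_smul .univ hσ hinj g
    simp only [himage, Measure.restrict_univ, g, abs_deriv_sigmoid_smul_betaIntegrand] at this
    rw [← this, betaIntegral, intervalIntegral.integral_of_le zero_le_one,
      integral_Ioc_eq_integral_Ioo]

theorem Complex.integrable_and_integral_cexp_mul_div_one_add_exp_eq_pi_div_sin {u : ℂ}
    (hu0 : 0 < u.re) (hu1 : u.re < 1) :
    Integrable (fun s : ℝ => Complex.exp (u * s) / ((1 + Real.exp s : ℝ) : ℂ)) ∧
      ∫ s : ℝ, Complex.exp (u * s) / ((1 + Real.exp s : ℝ) : ℂ) = π / sin (π * u) := by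
  have hv : 0 < (1 - u).re := by simpa using hu1
  have hB := integrable_and_integral_cexp_mul_div_cpow_eq_betaIntegral hu0 hv
  have hΓ := Gamma_mul_Gamma_eq_betaIntegral hu0 hv
  rw [add_sub_cancel, Gamma_one, one_mul, Gamma_mul_Gamma_one_sub] at hΓ
  simpa only [add_sub_cancel, cpow_one, hΓ] using hB

lemma cexp_I_mul_div_exp_add_exp_neg (p t : ℝ) :
    Complex.exp (Complex.I * t * p) / ((Real.exp (π * t) + Real.exp (-(π * t)) : ℝ) : ℂ) =
      Complex.exp ((1 / 2 + Complex.I * ((p / (2 * π) : ℝ) : ℂ)) * ↑(2 * π * t)) /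
        ((1 + Real.exp (2 * π * t) : ℝ) : ℂ) := by
  have hsum : Real.exp (π * t) + Real.exp (-(π * t)) =
      Real.exp (-(π * t)) * (1 + Real.exp (2 * π * t)) := by
    rw [mul_add, mul_one, ← Real.exp_add]
    ring_nf
  rw [hsum, Complex.ofReal_mul, ← div_div, div_eq_mul_inv _ (Real.exp _ : ℂ),
    ← Complex.ofReal_inv, ← Real.exp_neg, neg_neg, Complex.ofReal_exp, ← Complex.exp_add]
  congr 2
  push_cast
  field_simp
  ring

/-- For every real `p`, the function `t ↦ exp(i t p) / (exp(π t) + exp(-π t))` is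
integrable on `ℝ` and its integral equals `1 / (exp(p/2) + exp(-p/2))`. -/
theorem stmt0 (p : ℝ) :
    Integrable (fun t : ℝ =>
      Complex.exp (Complex.I * t * p) /
        ((Real.exp (Real.pi * t) + Real.exp (-(Real.pi * t)) : ℝ) : ℂ)) ∧
    ∫ t : ℝ, Complex.exp (Complex.I * t * p) /
        ((Real.exp (Real.pi * t) + Real.exp (-(Real.pi * t)) : ℝ) : ℂ)
      = 1 / ((Real.exp (p / 2) + Real.exp (-(p / 2)) : ℝ) : ℂ) := by
  set u : ℂ := 1 / 2 + Complex.I * ((p / (2 * π) : ℝ) : ℂ)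
  have hu : u.re = 1 / 2 := by simp [u, -Complex.ofReal_div]
  obtain ⟨hint, hval⟩ := Complex.integrable_and_integral_cexp_mul_div_one_add_exp_eq_pi_div_sin
    (u := u) (by rw [hu]; norm_num) (by rw [hu]; norm_num)
  have hsin : Complex.sin (π * u) = Real.cosh (p / 2) := by
    rw [Complex.ofReal_cosh, ← Complex.cos_mul_I, ← Complex.sin_add_pi_div_two]
    congr 1
    simp only [u]
    push_cast
    field_simp
    ring
  simp only [cexp_I_mul_div_exp_add_exp_neg]
  refine ⟨hint.comp_mul_left' (by positivity), ?_⟩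
  rw [Measure.integral_comp_mul_left
      (fun s : ℝ => Complex.exp (u * s) / ((1 + Real.exp s : ℝ) : ℂ)),
    hval, hsin, Real.cosh_eq, abs_of_pos (by positivity), Complex.real_smul]
  push_cast
  field_simp
end

section
/- Let H be a complex Hilbert space, let A and B be bounded, self-adjoint, positive operators on H, let λ > 0 and ξ ∈ H. Then Re⟨ξ, ((B+λ)^{-1} − (A+λ)^{-1}) ξ⟩ ≥ Re⟨(A+λ)^{-1} ξ, (A − B)(A+λ)^{-1} ξ⟩. -/
open scoped InnerProductSpace Ring

/-! Write `R_A = (A+λ)⁻¹`, `R_B = (B+λ)⁻¹`, `D = A - B`. Applying the resolvent identity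
`R_B - R_A = R_B D R_A` twice gives `R_B - R_A = R_A D R_A + (D R_A)* R_B (D R_A)`, and the last
term is positive because `R_B` is. -/

theorem Ring.inverse_sub_inverse_eq_add {R : Type*} [Ring R] {u v : R}
    (h : IsUnit u ↔ IsUnit v) :
    v⁻¹ʳ - u⁻¹ʳ = u⁻¹ʳ * (u - v) * u⁻¹ʳ + u⁻¹ʳ * (u - v) * v⁻¹ʳ * (u - v) * u⁻¹ʳ := by
  have hvu : v⁻¹ʳ - u⁻¹ʳ = v⁻¹ʳ * (u - v) * u⁻¹ʳ := Ring.inverse_sub_inverse h.symm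
  have huv : v⁻¹ʳ = u⁻¹ʳ + u⁻¹ʳ * (u - v) * v⁻¹ʳ := by
    rw [← sub_eq_iff_eq_add', ← neg_sub, Ring.inverse_sub_inverse h, ← neg_sub v u]
    noncomm_ring
  rw [hvu]
  nth_rw 1 [huv]
  noncomm_ring

theorem ringInverse_mul_sub_mul_ringInverse_le {A : Type*} [CStarAlgebra A] [PartialOrder A]
    [StarOrderedRing A] {u v : A} (hu : IsStrictlyPositive u) (hv : IsStrictlyPositive v) :
    u⁻¹ʳ * (u - v) * u⁻¹ʳ ≤ v⁻¹ʳ - u⁻¹ʳ := by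
  rw [Ring.inverse_sub_inverse_eq_add (iff_of_true hu.isUnit hv.isUnit)]
  refine le_add_of_nonneg_right ?_
  have hstar : star ((u - v) * u⁻¹ʳ) = u⁻¹ʳ * (u - v) := by
    rw [star_mul, hu.ringInverse.isSelfAdjoint.star_eq,
      (hu.isSelfAdjoint.sub hv.isSelfAdjoint).star_eq]
  simpa only [hstar, mul_assoc] using
    star_left_conjugate_nonneg hv.ringInverse.nonneg ((u - v) * u⁻¹ʳ)

namespace ContinuousLinearMap

theorem re_inner_map_le_of_le {𝕜 E : Type*} [RCLike 𝕜] [NormedAddCommGroup E]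
    [InnerProductSpace 𝕜 E] {S T : E →L[𝕜] E} (h : S ≤ T) (x : E) :
    RCLike.re ⟪x, S x⟫_𝕜 ≤ RCLike.re ⟪x, T x⟫_𝕜 := by
  simpa [inner_sub_right] using ((le_def S T).mp h).re_inner_nonneg_right x

theorem isStrictlyPositive_add_smul_one {H : Type*} [NormedAddCommGroup H]
    [InnerProductSpace ℂ H] [CompleteSpace H] {T : H →L[ℂ] H} (hT : T.IsPositive) {l : ℝ}
    (hl : 0 < l) : IsStrictlyPositive (T + (l : ℂ) • 1) := by
  refine IsStrictlyPositive.nonneg_add ((nonneg_iff_isPositive T).mpr hT) ?_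
  rw [Complex.coe_smul, ← Algebra.algebraMap_eq_smul_one]
  exact isStrictlyPositive_algebraMap hl

end ContinuousLinearMap

/-- For bounded, self-adjoint, positive operators `A`, `B` on a complex Hilbert space,
`λ > 0` and `ξ ∈ H`:
`Re⟨ξ, ((B+λ)⁻¹ − (A+λ)⁻¹)ξ⟩ ≥ Re⟨(A+λ)⁻¹ξ, (A − B)(A+λ)⁻¹ξ⟩`. -/
theorem stmt6 {H : Type*} [NormedAddCommGroup H] [InnerProductSpace ℂ H] [CompleteSpace H]
    (A B : H →L[ℂ] H) (hA : A.IsPositive) (hB : B.IsPositive)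
    (l : ℝ) (hl : 0 < l) (ξ : H) :
    (⟪ξ, (Ring.inverse (B + (l : ℂ) • 1) - Ring.inverse (A + (l : ℂ) • 1)) ξ⟫_ℂ).re ≥
      (⟪Ring.inverse (A + (l : ℂ) • 1) ξ,
        (A - B) (Ring.inverse (A + (l : ℂ) • 1) ξ)⟫_ℂ).re := by
  have hu := ContinuousLinearMap.isStrictlyPositive_add_smul_one hA hl
  have hv := ContinuousLinearMap.isStrictlyPositive_add_smul_one hB hl
  have hle := ringInverse_mul_sub_mul_ringInverse_le hu hv
  rw [add_sub_add_right_eq_sub] at hle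
  calc (⟪(A + (l : ℂ) • 1)⁻¹ʳ ξ, (A - B) ((A + (l : ℂ) • 1)⁻¹ʳ ξ)⟫_ℂ).re
      = (⟪ξ, ((A + (l : ℂ) • 1)⁻¹ʳ * (A - B) * (A + (l : ℂ) • 1)⁻¹ʳ) ξ⟫_ℂ).re :=
        congrArg Complex.re (hu.ringInverse.isSelfAdjoint.isSymmetric _ _)
    _ ≤ _ := ContinuousLinearMap.re_inner_map_le_of_le hle ξ
end
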